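/- arXiv:2302.13993 — 2 statements merged into one kernel-verified Lean document; each statement's English description precedes it below -/
import Mathlib

section
/- Let a₁, a₂, a₃ be pairwise coprime integers all ≥ 2, and let S = ⟨a₁a₂, a₁a₃, a₂a₃⟩ be the numerical semigroup generated by the pairwise products. Then S is symmetric with conductor c = 2a₁a₂a₃ − (a₁a₂ + a₁a₃ + a₂a₃) + 1. -/
noncomputable def mySol (a m n : ℕ) : ℕ := ((n : ZMod a) * (m : ZMod a)⁻¹).val

lemma mySol_lt (a m : ℕ) (ha : 0 < a) (n : ℕ) : mySol a m n < a := by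
  haveI : NeZero a := ⟨ha.ne'⟩
  exact ZMod.val_lt _

lemma mySol_spec (a m : ℕ) (ha : 0 < a) (hm : Nat.Coprime m a) (n : ℕ) :
    ((mySol a m n : ℕ) : ZMod a) * (m : ZMod a) = (n : ZMod a) := by
  haveI : NeZero a := ⟨ha.ne'⟩
  rw [mySol, ZMod.natCast_val, ZMod.cast_id, mul_assoc,
    ZMod.inv_mul_of_unit _ ((ZMod.isUnit_iff_coprime m a).mpr hm), mul_one]

lemma mySol_eq (a m : ℕ) (ha : 0 < a) (hm : Nat.Coprime m a) (n x : ℕ)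
    (hx : ((x : ZMod a) * (m : ZMod a)) = (n : ZMod a)) : mySol a m n = x % a := by
  haveI : NeZero a := ⟨ha.ne'⟩
  have hu := (ZMod.isUnit_iff_coprime m a).mpr hm
  have : (n : ZMod a) * (m : ZMod a)⁻¹ = (x : ZMod a) := by
    rw [← hx, mul_assoc, ZMod.mul_inv_of_unit _ hu, mul_one]
  rw [mySol, this, ZMod.val_natCast]

lemma mySol_zero (a m : ℕ) : mySol a m 0 = 0 := by
  simp [mySol]

lemma mySol_reflect (a m : ℕ) (ha : 0 < a) (hm : Nat.Coprime m a) (F n : ℕ) (hn : n ≤ F)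
    (hF : ((F : ℕ) : ZMod a) = - (m : ZMod a)) :
    mySol a m (F - n) + mySol a m n = a - 1 := by
  have h1 := mySol_lt a m ha n
  have key : (((a - 1 - mySol a m n : ℕ)) : ZMod a) * (m : ZMod a) = ((F - n : ℕ) : ZMod a) := by
    have hs := mySol_spec a m ha hm n
    rw [Nat.cast_sub (by omega : mySol a m n ≤ a - 1), Nat.cast_sub (by omega : 1 ≤ a),
      Nat.cast_sub hn, hF, ZMod.natCast_self]
    push_cast
    linear_combination -hs
  have := mySol_eq a m ha hm (F - n) _ key
  rw [this, Nat.mod_eq_of_lt (by omega)]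
  omega

noncomputable def myR (a₁ a₂ a₃ n : ℕ) : ℕ :=
  mySol a₃ (a₁*a₂) n * (a₁*a₂) + mySol a₂ (a₁*a₃) n * (a₁*a₃) + mySol a₁ (a₂*a₃) n * (a₂*a₃)

lemma myR_dvd (a₁ a₂ a₃ : ℕ) (ha1 : 0 < a₁) (ha2 : 0 < a₂) (ha3 : 0 < a₃)
    (c12 : Nat.Coprime a₁ a₂) (c13 : Nat.Coprime a₁ a₃) (c23 : Nat.Coprime a₂ a₃) (n : ℕ) :
    ((a₁*a₂*a₃ : ℕ) : ℤ) ∣ (n : ℤ) - (myR a₁ a₂ a₃ n : ℤ) := by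
  have key : ∀ (a : ℕ), 0 < a → ∀ (m : ℕ), Nat.Coprime m a →
      (a : ℤ) ∣ (n : ℤ) - (mySol a m n * m : ℕ) := by
    intro a ha m hm
    have hs := mySol_spec a m ha hm n
    have : ((mySol a m n * m : ℕ) : ZMod a) = (n : ZMod a) := by push_cast; exact hs
    exact_mod_cast ((ZMod.natCast_eq_natCast_iff _ _ _).mp this).dvd
  have d3 : (a₃ : ℤ) ∣ (n : ℤ) - (myR a₁ a₂ a₃ n : ℤ) := by
    obtain ⟨k, hk⟩ := key a₃ ha3 (a₁*a₂) (c13.mul c23)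
    refine ⟨k - (mySol a₂ (a₁*a₃) n * a₁ + mySol a₁ (a₂*a₃) n * a₂), ?_⟩
    unfold myR; push_cast at hk ⊢; linear_combination hk
  have d2 : (a₂ : ℤ) ∣ (n : ℤ) - (myR a₁ a₂ a₃ n : ℤ) := by
    obtain ⟨k, hk⟩ := key a₂ ha2 (a₁*a₃) (c12.mul c23.symm)
    refine ⟨k - (mySol a₃ (a₁*a₂) n * a₁ + mySol a₁ (a₂*a₃) n * a₃), ?_⟩
    unfold myR; push_cast at hk ⊢; linear_combination hk
  have d1 : (a₁ : ℤ) ∣ (n : ℤ) - (myR a₁ a₂ a₃ n : ℤ) := by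
    obtain ⟨k, hk⟩ := key a₁ ha1 (a₂*a₃) (c12.symm.mul c13.symm)
    refine ⟨k - (mySol a₃ (a₁*a₂) n * a₂ + mySol a₂ (a₁*a₃) n * a₃), ?_⟩
    unfold myR; push_cast at hk ⊢; linear_combination hk
  have i12 : IsCoprime (a₁ : ℤ) (a₂ : ℤ) := Int.isCoprime_iff_gcd_eq_one.mpr (by simpa using c12)
  have i13 : IsCoprime (a₁ : ℤ) (a₃ : ℤ) := Int.isCoprime_iff_gcd_eq_one.mpr (by simpa using c13)
  have i23 : IsCoprime (a₂ : ℤ) (a₃ : ℤ) := Int.isCoprime_iff_gcd_eq_one.mpr (by simpa using c23)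
  have d12 := i12.mul_dvd d1 d2
  have i3 : IsCoprime ((a₁ : ℤ) * a₂) (a₃ : ℤ) := i13.mul_left i23
  have := i3.mul_dvd d12 d3
  have e : ((a₁*a₂*a₃ : ℕ) : ℤ) = (a₁ : ℤ) * a₂ * a₃ := by push_cast; ring
  rw [e]
  exact this

lemma myR_mem_iff (a₁ a₂ a₃ : ℕ) (ha1 : 0 < a₁) (ha2 : 0 < a₂) (ha3 : 0 < a₃)
    (c12 : Nat.Coprime a₁ a₂) (c13 : Nat.Coprime a₁ a₃) (c23 : Nat.Coprime a₂ a₃) (n : ℕ) :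
    (∃ x y z : ℕ, n = x * (a₁ * a₂) + y * (a₁ * a₃) + z * (a₂ * a₃)) ↔ myR a₁ a₂ a₃ n ≤ n := by
  constructor
  · rintro ⟨x, y, z, hn⟩
    have hx : mySol a₃ (a₁*a₂) n ≤ x := by
      have h : ((x : ZMod a₃) * (((a₁*a₂ : ℕ)) : ZMod a₃)) = (n : ZMod a₃) := by
        subst hn; push_cast [ZMod.natCast_self]; ring
      rw [mySol_eq a₃ (a₁*a₂) ha3 (c13.mul c23) n x h]
      exact Nat.mod_le x a₃
    have hy : mySol a₂ (a₁*a₃) n ≤ y := by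
      have h : ((y : ZMod a₂) * (((a₁*a₃ : ℕ)) : ZMod a₂)) = (n : ZMod a₂) := by
        subst hn; push_cast [ZMod.natCast_self]; ring
      rw [mySol_eq a₂ (a₁*a₃) ha2 (c12.mul c23.symm) n y h]
      exact Nat.mod_le y a₂
    have hz : mySol a₁ (a₂*a₃) n ≤ z := by
      have h : ((z : ZMod a₁) * (((a₂*a₃ : ℕ)) : ZMod a₁)) = (n : ZMod a₁) := by
        subst hn; push_cast [ZMod.natCast_self]; ring
      rw [mySol_eq a₁ (a₂*a₃) ha1 (c12.symm.mul c13.symm) n z h]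
      exact Nat.mod_le z a₁
    subst hn; unfold myR; gcongr
  · intro h
    have hd := myR_dvd a₁ a₂ a₃ ha1 ha2 ha3 c12 c13 c23 n
    have hdn : (a₁*a₂*a₃ : ℕ) ∣ (n - myR a₁ a₂ a₃ n) := by
      have h2 : ((n - myR a₁ a₂ a₃ n : ℕ) : ℤ) = (n : ℤ) - (myR a₁ a₂ a₃ n : ℤ) :=
        Nat.cast_sub h
      exact_mod_cast h2 ▸ hd
    obtain ⟨k, hk⟩ := hdn
    refine ⟨mySol a₃ (a₁*a₂) n + k * a₃, mySol a₂ (a₁*a₃) n, mySol a₁ (a₂*a₃) n, ?_⟩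
    have hn : n = myR a₁ a₂ a₃ n + (a₁*a₂*a₃) * k := by omega
    conv_lhs => rw [hn]
    unfold myR; ring

/-- The supersymmetric semigroup `⟨a₁a₂, a₁a₃, a₂a₃⟩` is symmetric with conductor
`2a₁a₂a₃ − (a₁a₂ + a₁a₃ + a₂a₃) + 1`. -/
theorem supersymmetric_symmetric_conductor
    (a₁ a₂ a₃ : ℕ) (h1 : 2 ≤ a₁) (h2 : 2 ≤ a₂) (h3 : 2 ≤ a₃)
    (c12 : Nat.Coprime a₁ a₂) (c13 : Nat.Coprime a₁ a₃) (c23 : Nat.Coprime a₂ a₃)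
    (S : Set ℕ)
    (hS : S = {n : ℕ | ∃ x y z : ℕ, n = x * (a₁ * a₂) + y * (a₁ * a₃) + z * (a₂ * a₃)})
    (c : ℕ) (hcdef : c = 2 * (a₁ * a₂ * a₃) - (a₁ * a₂ + a₁ * a₃ + a₂ * a₃) + 1) :
    (∀ n : ℕ, c ≤ n → n ∈ S) ∧ (c - 1 ∉ S) ∧
      (∀ x : ℕ, x < c → (x ∈ S ↔ c - 1 - x ∉ S)) := by
  subst hS
  have ha1 : 0 < a₁ := by omega
  have ha2 : 0 < a₂ := by omega
  have ha3 : 0 < a₃ := by omega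
  have hsum : a₁ * a₂ + a₁ * a₃ + a₂ * a₃ ≤ 2 * (a₁ * a₂ * a₃) := by
    have e1 : a₁ * a₂ * 2 ≤ a₁ * a₂ * a₃ := Nat.mul_le_mul_left _ h3
    have e2 : a₁ * a₃ * 2 ≤ a₁ * a₃ * a₂ := Nat.mul_le_mul_left _ h2
    have e3 : a₂ * a₃ * 2 ≤ a₂ * a₃ * a₁ := Nat.mul_le_mul_left _ h1
    nlinarith [e1, e2, e3]
  set F := 2 * (a₁ * a₂ * a₃) - (a₁ * a₂ + a₁ * a₃ + a₂ * a₃) with hFdef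
  have hFp : F + (a₁ * a₂ + a₁ * a₃ + a₂ * a₃) = 2 * (a₁ * a₂ * a₃) := by omega
  have hcF : c = F + 1 := hcdef
  have hApos : 0 < a₁ * a₂ * a₃ := by positivity
  have memiff : ∀ n : ℕ,
      (n ∈ {n : ℕ | ∃ x y z : ℕ, n = x * (a₁ * a₂) + y * (a₁ * a₃) + z * (a₂ * a₃)}) ↔
        myR a₁ a₂ a₃ n ≤ n := fun n =>
    myR_mem_iff a₁ a₂ a₃ ha1 ha2 ha3 c12 c13 c23 n
  -- reflection formulas for F
  have hF3 : ((F : ℕ) : ZMod a₃) = - (((a₁ * a₂ : ℕ)) : ZMod a₃) := by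
    rw [show (F : ℕ) = 2 * (a₁ * a₂ * a₃) - (a₁ * a₂ + a₁ * a₃ + a₂ * a₃) from rfl,
      Nat.cast_sub hsum]
    push_cast [ZMod.natCast_self]
    ring
  have hF2 : ((F : ℕ) : ZMod a₂) = - (((a₁ * a₃ : ℕ)) : ZMod a₂) := by
    rw [show (F : ℕ) = 2 * (a₁ * a₂ * a₃) - (a₁ * a₂ + a₁ * a₃ + a₂ * a₃) from rfl,
      Nat.cast_sub hsum]
    push_cast [ZMod.natCast_self]
    ring
  have hF1 : ((F : ℕ) : ZMod a₁) = - (((a₂ * a₃ : ℕ)) : ZMod a₁) := by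
    rw [show (F : ℕ) = 2 * (a₁ * a₂ * a₃) - (a₁ * a₂ + a₁ * a₃ + a₂ * a₃) from rfl,
      Nat.cast_sub hsum]
    push_cast [ZMod.natCast_self]
    ring
  have hval : (a₃ - 1) * (a₁*a₂) + (a₂ - 1) * (a₁*a₃) + (a₁ - 1) * (a₂*a₃)
      = F + a₁ * a₂ * a₃ := by
    have e1 : (a₃ - 1) * (a₁*a₂) + (a₁*a₂) = a₁*a₂*a₃ := by
      have h : a₃ - 1 + 1 = a₃ := by omega
      calc (a₃ - 1) * (a₁*a₂) + (a₁*a₂) = (a₃ - 1 + 1) * (a₁*a₂) := by ring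
      _ = a₁*a₂*a₃ := by rw [h]; ring
    have e2 : (a₂ - 1) * (a₁*a₃) + (a₁*a₃) = a₁*a₂*a₃ := by
      have h : a₂ - 1 + 1 = a₂ := by omega
      calc (a₂ - 1) * (a₁*a₃) + (a₁*a₃) = (a₂ - 1 + 1) * (a₁*a₃) := by ring
      _ = a₁*a₂*a₃ := by rw [h]; ring
    have e3 : (a₁ - 1) * (a₂*a₃) + (a₂*a₃) = a₁*a₂*a₃ := by
      have h : a₁ - 1 + 1 = a₁ := by omega
      calc (a₁ - 1) * (a₂*a₃) + (a₂*a₃) = (a₁ - 1 + 1) * (a₂*a₃) := by ring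
      _ = a₁*a₂*a₃ := by rw [h]; ring
    omega
  have hrefl : ∀ n : ℕ, n ≤ F →
      myR a₁ a₂ a₃ (F - n) + myR a₁ a₂ a₃ n = F + a₁ * a₂ * a₃ := by
    intro n hn
    have rX := mySol_reflect a₃ (a₁*a₂) ha3 (c13.mul c23) F n hn hF3
    have rY := mySol_reflect a₂ (a₁*a₃) ha2 (c12.mul c23.symm) F n hn hF2
    have rZ := mySol_reflect a₁ (a₂*a₃) ha1 (c12.symm.mul c13.symm) F n hn hF1
    have goal' : (mySol a₃ (a₁*a₂) (F-n) + mySol a₃ (a₁*a₂) n) * (a₁*a₂)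
        + (mySol a₂ (a₁*a₃) (F-n) + mySol a₂ (a₁*a₃) n) * (a₁*a₃)
        + (mySol a₁ (a₂*a₃) (F-n) + mySol a₁ (a₂*a₃) n) * (a₂*a₃)
        = (a₃ - 1) * (a₁*a₂) + (a₂ - 1) * (a₁*a₃) + (a₁ - 1) * (a₂*a₃) := by
      rw [rX, rY, rZ]
    unfold myR
    calc mySol a₃ (a₁*a₂) (F-n) * (a₁*a₂) + mySol a₂ (a₁*a₃) (F-n) * (a₁*a₃)
          + mySol a₁ (a₂*a₃) (F-n) * (a₂*a₃)
        + (mySol a₃ (a₁*a₂) n * (a₁*a₂) + mySol a₂ (a₁*a₃) n * (a₁*a₃)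
          + mySol a₁ (a₂*a₃) n * (a₂*a₃))
        = (mySol a₃ (a₁*a₂) (F-n) + mySol a₃ (a₁*a₂) n) * (a₁*a₂)
        + (mySol a₂ (a₁*a₃) (F-n) + mySol a₂ (a₁*a₃) n) * (a₁*a₃)
        + (mySol a₁ (a₂*a₃) (F-n) + mySol a₁ (a₂*a₃) n) * (a₂*a₃) := by ring
      _ = F + a₁ * a₂ * a₃ := by rw [goal', hval]
  -- upper bound on myR
  have hbound : ∀ n : ℕ, myR a₁ a₂ a₃ n ≤ F + a₁ * a₂ * a₃ := by
    intro n
    have bX := mySol_lt a₃ (a₁*a₂) ha3 n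
    have bY := mySol_lt a₂ (a₁*a₃) ha2 n
    have bZ := mySol_lt a₁ (a₂*a₃) ha1 n
    have step : myR a₁ a₂ a₃ n ≤ (a₃ - 1) * (a₁*a₂) + (a₂ - 1) * (a₁*a₃) + (a₁ - 1) * (a₂*a₃) := by
      unfold myR; gcongr <;> omega
    omega
  refine ⟨?_, ?_, ?_⟩
  · -- everything ≥ c is in S
    intro n hn
    rw [Set.mem_setOf_eq, myR_mem_iff a₁ a₂ a₃ ha1 ha2 ha3 c12 c13 c23 n]
    by_contra hcon
    push_neg at hcon
    obtain ⟨k, hk⟩ := myR_dvd a₁ a₂ a₃ ha1 ha2 ha3 c12 c13 c23 n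
    have hAZ : (0:ℤ) < ((a₁*a₂*a₃ : ℕ) : ℤ) := by exact_mod_cast hApos
    have hlt : (n : ℤ) < (myR a₁ a₂ a₃ n : ℤ) := by exact_mod_cast hcon
    have hkneg : k ≤ -1 := by
      by_contra hk2
      push_neg at hk2
      have : (0:ℤ) ≤ ((a₁*a₂*a₃ : ℕ) : ℤ) * k := mul_nonneg (by linarith) (by omega)
      linarith
    have hmul : ((a₁*a₂*a₃ : ℕ) : ℤ) * k ≤ ((a₁*a₂*a₃ : ℕ) : ℤ) * (-1) :=
      mul_le_mul_of_nonneg_left hkneg (by linarith)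
    have hb' : ((myR a₁ a₂ a₃ n : ℕ) : ℤ) ≤ (F : ℤ) + ((a₁*a₂*a₃ : ℕ) : ℤ) := by
      exact_mod_cast hbound n
    have hc1 : (F : ℤ) + 1 ≤ (n : ℤ) := by
      have : F + 1 ≤ n := by omega
      exact_mod_cast this
    linarith
  · -- c - 1 ∉ S
    have hr0 : myR a₁ a₂ a₃ 0 = 0 := by unfold myR; simp [mySol_zero]
    have hF0 := hrefl 0 (Nat.zero_le F)
    rw [Nat.sub_zero, hr0] at hF0
    have hc1 : c - 1 = F := by omega
    rw [hc1, Set.mem_setOf_eq, myR_mem_iff a₁ a₂ a₃ ha1 ha2 ha3 c12 c13 c23 F]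
    omega
  · -- symmetry
    intro x hx
    have hxF : x ≤ F := by omega
    have hc1 : c - 1 - x = F - x := by omega
    rw [hc1, Set.mem_setOf_eq, Set.mem_setOf_eq,
      myR_mem_iff a₁ a₂ a₃ ha1 ha2 ha3 c12 c13 c23 x,
      myR_mem_iff a₁ a₂ a₃ ha1 ha2 ha3 c12 c13 c23 (F - x)]
    have hre := hrefl x hxF
    constructor
    · intro hrx
      omega
    · intro hnot
      have hlt2 : myR a₁ a₂ a₃ x < x + a₁*a₂*a₃ := by omega
      by_contra hcon
      push_neg at hcon
      obtain ⟨k, hk⟩ := myR_dvd a₁ a₂ a₃ ha1 ha2 ha3 c12 c13 c23 x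
      have hAZ : (0:ℤ) < ((a₁*a₂*a₃ : ℕ) : ℤ) := by exact_mod_cast hApos
      have hltz : (x : ℤ) < (myR a₁ a₂ a₃ x : ℤ) := by exact_mod_cast hcon
      have hkneg : k ≤ -1 := by
        by_contra hk2
        push_neg at hk2
        have : (0:ℤ) ≤ ((a₁*a₂*a₃ : ℕ) : ℤ) * k := mul_nonneg (by linarith) (by omega)
        linarith
      have hmul : ((a₁*a₂*a₃ : ℕ) : ℤ) * k ≤ ((a₁*a₂*a₃ : ℕ) : ℤ) * (-1) :=
        mul_le_mul_of_nonneg_left hkneg (by linarith)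
      have hlt2z : ((myR a₁ a₂ a₃ x : ℕ) : ℤ) < (x : ℤ) + ((a₁*a₂*a₃ : ℕ) : ℤ) := by
        exact_mod_cast hlt2
      linarith
end

section
/- Let a₁, a₂, a₃ be pairwise coprime integers ≥ 2 and S = ⟨a₁a₂, a₁a₃, a₂a₃⟩. Every element s ∈ S with s < a₁a₂a₃ has a unique representation s = x·a₂a₃ + y·a₁a₃ + z·a₁a₂ with x, y, z ∈ ℕ. -/
lemma aux_coprime_cancel (a b : ℕ) (hcop : Nat.Coprime a b)
    (x x' u u' : ℕ) (hx : x < a) (hx' : x' < a)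
    (h : x * b + a * u = x' * b + a * u') : x = x' := by
  have hmod : x * b ≡ x' * b [MOD a] := by
    unfold Nat.ModEq
    calc x * b % a = (x * b + a * u) % a := by rw [Nat.add_mul_mod_self_left]
    _ = (x' * b + a * u') % a := by rw [h]
    _ = x' * b % a := by rw [Nat.add_mul_mod_self_left]
  have hxx : x ≡ x' [MOD a] := hmod.cancel_right_of_coprime (by simpa [Nat.Coprime] using hcop.gcd_eq_one)
  have := hxx
  unfold Nat.ModEq at this
  rwa [Nat.mod_eq_of_lt hx, Nat.mod_eq_of_lt hx'] at this

/-- Unique factorization below the Betti element `a₁a₂a₃` in the supersymmetric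
semigroup `⟨a₁a₂, a₁a₃, a₂a₃⟩`. -/
theorem supersymmetric_unique_factorization_below_betti
    (a₁ a₂ a₃ : ℕ) (h1 : 2 ≤ a₁) (h2 : 2 ≤ a₂) (h3 : 2 ≤ a₃)
    (c12 : Nat.Coprime a₁ a₂) (c13 : Nat.Coprime a₁ a₃) (c23 : Nat.Coprime a₂ a₃) :
    ∀ s : ℕ, s < a₁ * a₂ * a₃ →
      ∀ x y z x' y' z' : ℕ,
        s = x * (a₂ * a₃) + y * (a₁ * a₃) + z * (a₁ * a₂) →
        s = x' * (a₂ * a₃) + y' * (a₁ * a₃) + z' * (a₁ * a₂) →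
        x = x' ∧ y = y' ∧ z = z' := by
  intro s hs x y z x' y' z' e1 e2
  have hx : x < a₁ := by
    have : x * (a₂ * a₃) < a₁ * (a₂ * a₃) := by
      calc x * (a₂ * a₃) ≤ s := by omega
      _ < a₁ * (a₂ * a₃) := by rw [← Nat.mul_assoc]; exact hs
    exact Nat.lt_of_mul_lt_mul_right this
  have hx' : x' < a₁ := by
    have : x' * (a₂ * a₃) < a₁ * (a₂ * a₃) := by
      calc x' * (a₂ * a₃) ≤ s := by omega
      _ < a₁ * (a₂ * a₃) := by rw [← Nat.mul_assoc]; exact hs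
    exact Nat.lt_of_mul_lt_mul_right this
  have hy : y < a₂ := by
    have : y * (a₁ * a₃) < a₂ * (a₁ * a₃) := by
      calc y * (a₁ * a₃) ≤ s := by omega
      _ < a₂ * (a₁ * a₃) := by linarith [hs, Nat.mul_comm a₁ a₂,
        show a₂ * (a₁ * a₃) = a₁ * a₂ * a₃ by ring]
    exact Nat.lt_of_mul_lt_mul_right this
  have hy' : y' < a₂ := by
    have : y' * (a₁ * a₃) < a₂ * (a₁ * a₃) := by
      calc y' * (a₁ * a₃) ≤ s := by omega
      _ < a₂ * (a₁ * a₃) := by linarith [hs, show a₂ * (a₁ * a₃) = a₁ * a₂ * a₃ by ring]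
    exact Nat.lt_of_mul_lt_mul_right this
  have hxe : x = x' := by
    apply aux_coprime_cancel a₁ (a₂ * a₃) (c12.mul_right c13) x x'
      (y * a₃ + z * a₂) (y' * a₃ + z' * a₂) hx hx'
    have l1 : x * (a₂ * a₃) + a₁ * (y * a₃ + z * a₂) = s := by rw [e1]; ring
    have l2 : x' * (a₂ * a₃) + a₁ * (y' * a₃ + z' * a₂) = s := by rw [e2]; ring
    rw [l1, l2]
  have hye : y = y' := by
    apply aux_coprime_cancel a₂ (a₁ * a₃) (c12.symm.mul_right c23) y y'
      (x * a₃ + z * a₁) (x' * a₃ + z' * a₁) hy hy'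
    have l1 : y * (a₁ * a₃) + a₂ * (x * a₃ + z * a₁) = s := by rw [e1]; ring
    have l2 : y' * (a₁ * a₃) + a₂ * (x' * a₃ + z' * a₁) = s := by rw [e2]; ring
    rw [l1, l2]
  refine ⟨hxe, hye, ?_⟩
  subst hxe hye
  have hz : z * (a₁ * a₂) = z' * (a₁ * a₂) := by omega
  have hpos : 0 < a₁ * a₂ := by positivity
  exact Nat.eq_of_mul_eq_mul_right hpos hz
end
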